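/- The stochastic dynamics equation implies the Klein–Gordon equation: with V^μ(x) = (1/m₀)[iℏ∂^μ ln φ + eA^μ], V̂^μ := V^μ + i(λ²/2)∂^μ, D_τ := V̂^μ∂_μ and λ² = ℏ/m₀, one has the identity m₀D_τV^μ + e V̂_ν F^{μν} = (1/2)∂^μ[ (iℏ∂_ν + eA_ν)(iℏ∂^ν + eA^ν)φ / (m₀ φ) ], where F^{μν} = ∂^μA^ν − ∂^νA^μ; in particular, if φ satisfies the Klein–Gordon equation (iℏ∂_ν + eA_ν)(iℏ∂^ν + eA^ν)φ = m₀²c²φ, then m₀D_τV^μ = −e V̂_ν F^{μν}. -/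

import Mathlib

/-- Partial derivative `∂_μ f` of a complex-valued function on `ℝ⁴`. -/
noncomputable def pdC (i : Fin 4) (f : (Fin 4 → ℝ) → ℂ) (x : Fin 4 → ℝ) : ℂ :=
  fderiv ℝ f x (Pi.single i 1)

/-- Partial derivative `∂_μ f` of a real-valued function on `ℝ⁴`. -/
noncomputable def pdR (i : Fin 4) (f : (Fin 4 → ℝ) → ℝ) (x : Fin 4 → ℝ) : ℝ :=
  fderiv ℝ f x (Pi.single i 1)

/-- Metric signs of `g = diag(+1,−1,−1,−1)`. -/
def mink (i : Fin 4) : ℝ := if i = 0 then 1 else -1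

/-- The complex d'Alembertian `∂_μ∂^μ f`. -/
noncomputable def boxC (f : (Fin 4 → ℝ) → ℂ) (x : Fin 4 → ℝ) : ℂ :=
  ∑ μ : Fin 4, (mink μ : ℂ) * pdC μ (pdC μ f) x

/-- Complex velocity `V^μ = (1/m₀)[iℏ ∂^μ ln φ + e A^μ]` for nowhere-vanishing `φ`
(`∂^μ ln φ = ∂^μ φ / φ`). -/
noncomputable def VelPhi (m0 hbar e : ℝ) (φ : (Fin 4 → ℝ) → ℂ)
    (A : Fin 4 → (Fin 4 → ℝ) → ℝ) (μ : Fin 4) (x : Fin 4 → ℝ) : ℂ :=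
  (1 / m0) * (Complex.I * hbar * ((mink μ : ℂ) * pdC μ φ x / φ x) + e * A μ x)

/-- `iℏD_ν ψ = (iℏ∂_ν + eA_ν)ψ`, with `A_ν = g_{νρ}A^ρ`. -/
noncomputable def opLow (hbar e : ℝ) (A : Fin 4 → (Fin 4 → ℝ) → ℝ) (ν : Fin 4)
    (ψ : (Fin 4 → ℝ) → ℂ) (x : Fin 4 → ℝ) : ℂ :=
  Complex.I * hbar * pdC ν ψ x + e * ((mink ν * A ν x : ℝ) : ℂ) * ψ x

/-- `(iℏD_μ)(iℏD^μ)ψ = (iℏ∂_ν + eA_ν)(iℏ∂^ν + eA^ν)ψ`. -/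
noncomputable def KGop (hbar e : ℝ) (A : Fin 4 → (Fin 4 → ℝ) → ℝ)
    (ψ : (Fin 4 → ℝ) → ℂ) (x : Fin 4 → ℝ) : ℂ :=
  ∑ ν : Fin 4, (mink ν : ℂ) * opLow hbar e A ν (fun y => opLow hbar e A ν ψ y) x

/-- Field tensor `F^{μν} = ∂^μ A^ν − ∂^ν A^μ`. -/
noncomputable def Ften (A : Fin 4 → (Fin 4 → ℝ) → ℝ) (μ ν : Fin 4) (x : Fin 4 → ℝ) : ℝ :=
  mink μ * pdR μ (A ν) x - mink ν * pdR ν (A μ) x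

/-- `D_τ g = V̂^μ ∂_μ g = V^μ ∂_μ g + i(λ²/2) ∂^μ∂_μ g`. -/
noncomputable def Dtau (m0 hbar e lam : ℝ) (φ : (Fin 4 → ℝ) → ℂ)
    (A : Fin 4 → (Fin 4 → ℝ) → ℝ) (g : (Fin 4 → ℝ) → ℂ) (x : Fin 4 → ℝ) : ℂ :=
  (∑ μ : Fin 4, VelPhi m0 hbar e φ A μ x * pdC μ g x)
    + Complex.I * ((lam ^ 2 / 2 : ℝ) : ℂ) * boxC g x

/-- `V̂_ν F^{μν} = V_ν F^{μν} + i(λ²/2) ∂_ν F^{μν}`. -/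
noncomputable def VhatF (m0 hbar e lam : ℝ) (φ : (Fin 4 → ℝ) → ℂ)
    (A : Fin 4 → (Fin 4 → ℝ) → ℝ) (μ : Fin 4) (x : Fin 4 → ℝ) : ℂ :=
  (∑ ν : Fin 4, (mink ν : ℂ) * VelPhi m0 hbar e φ A ν x * ((Ften A μ ν x : ℝ) : ℂ))
    + Complex.I * ((lam ^ 2 / 2 : ℝ) : ℂ) *
        ((∑ ν : Fin 4, pdR ν (fun y => Ften A μ ν y) x : ℝ) : ℂ)

/-!
Because `(iℏ∂_ν + eA_ν)φ = m₀ V_ν φ`, the product rule gives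
`(iℏ∂_ν + eA_ν)(iℏ∂^ν + eA^ν)φ / (m₀φ) = m₀ V_ν V^ν + iℏ ∂_ν V^ν`.
Since `∂_μ(∂_ν φ / φ)` is symmetric in `μ, ν`, the curl of `V` is the field tensor:
`m₀ (∂^μ V^ν − ∂^ν V^μ) = e F^{μν}`. Substituting this and its divergence into
`m₀ D_τ V^μ + e V̂_ν F^{μν}` and using `m₀ λ² = ℏ` leaves `m₀ V_ν ∂^μ V^ν + (iℏ/2) ∂^μ ∂_ν V^ν`,
which is `(1/2) ∂^μ` of the first expression. Under the Klein–Gordon equation that expression is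
the constant `m₀ c²`.
-/

open Complex

lemma mink_mul_self (i : Fin 4) : mink i * mink i = 1 := by
  unfold mink; split_ifs <;> norm_num

section PartialDerivatives

variable {i : Fin 4} {x : Fin 4 → ℝ} {f g : (Fin 4 → ℝ) → ℂ}

lemma pdC_add (hf : DifferentiableAt ℝ f x) (hg : DifferentiableAt ℝ g x) :
    pdC i (fun y => f y + g y) x = pdC i f x + pdC i g x := by
  simp [pdC, fderiv_fun_add hf hg]

lemma pdC_sub (hf : DifferentiableAt ℝ f x) (hg : DifferentiableAt ℝ g x) :
    pdC i (fun y => f y - g y) x = pdC i f x - pdC i g x := by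
  simp [pdC, fderiv_fun_sub hf hg]

lemma pdC_const_mul (hf : DifferentiableAt ℝ f x) (c : ℂ) :
    pdC i (fun y => c * f y) x = c * pdC i f x := by
  simp [pdC, fderiv_const_mul hf]

lemma pdC_mul (hf : DifferentiableAt ℝ f x) (hg : DifferentiableAt ℝ g x) :
    pdC i (fun y => f y * g y) x = pdC i f x * g x + f x * pdC i g x := by
  simp [pdC, fderiv_fun_mul hf hg]
  ring

lemma pdC_sum {F : Fin 4 → (Fin 4 → ℝ) → ℂ} (hF : ∀ ν, DifferentiableAt ℝ (F ν) x) :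
    pdC i (fun y => ∑ ν, F ν y) x = ∑ ν, pdC i (F ν) x := by
  simp [pdC, fderiv_fun_sum fun ν _ => hF ν]

lemma pdC_inv (hg : DifferentiableAt ℝ g x) (hx : g x ≠ 0) :
    pdC i (fun y => (g y)⁻¹) x = -pdC i g x / g x ^ 2 := by
  rw [pdC, HasFDerivAt.fderiv (f := fun y => (g y)⁻¹)
    ((hasFDerivAt_inv' (𝕜 := ℝ) hx).comp x hg.hasFDerivAt)]
  simp [pdC]
  field_simp

lemma pdC_div (hf : DifferentiableAt ℝ f x) (hg : DifferentiableAt ℝ g x) (hx : g x ≠ 0) :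
    pdC i (fun y => f y / g y) x = (pdC i f x * g x - f x * pdC i g x) / g x ^ 2 := by
  simp only [div_eq_mul_inv]
  rw [pdC_mul hf (hg.fun_inv hx), pdC_inv hg hx]
  field_simp
  ring

lemma pdC_ofReal {u : (Fin 4 → ℝ) → ℝ} (hu : DifferentiableAt ℝ u x) :
    pdC i (fun y => (u y : ℂ)) x = pdR i u x := by
  rw [pdC, HasFDerivAt.fderiv (f := fun y => (u y : ℂ))
    (ofRealCLM.hasFDerivAt.comp x hu.hasFDerivAt)]
  simp [pdR]

lemma pdC_const (c : ℂ) : pdC i (fun _ => c) x = 0 := by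
  simp [pdC]

lemma contDiff_pdC {n : WithTop ℕ∞} (hf : ContDiff ℝ (n + 1) f) (i : Fin 4) :
    ContDiff ℝ n (pdC i f) :=
  (hf.fderiv_right le_rfl).clm_apply contDiff_const

lemma pdC_comm (hf : ContDiff ℝ 2 f) (i j : Fin 4) (x : Fin 4 → ℝ) :
    pdC i (pdC j f) x = pdC j (pdC i f) x := by
  have hdf : DifferentiableAt ℝ (fderiv ℝ f) x :=
    (hf.fderiv_right (m := 1) (by norm_num)).differentiable (by norm_num) x
  have key : ∀ v w : Fin 4 → ℝ,
      fderiv ℝ (fun y => fderiv ℝ f y v) x w = fderiv ℝ (fderiv ℝ f) x w v := by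
    intro v w
    simp [fderiv_clm_apply hdf (differentiableAt_const v)]
  change fderiv ℝ (fun y => fderiv ℝ f y (Pi.single j 1)) x (Pi.single i 1)
    = fderiv ℝ (fun y => fderiv ℝ f y (Pi.single i 1)) x (Pi.single j 1)
  rw [key, key, (hf.contDiffAt.isSymmSndFDerivAt (by simp)).eq]

lemma differentiable_pdC (hf : ContDiff ℝ 2 f) (i : Fin 4) : Differentiable ℝ (pdC i f) :=
  (contDiff_pdC (n := 1) hf i).differentiable (by norm_num)

lemma contDiff_pdR {n : WithTop ℕ∞} {u : (Fin 4 → ℝ) → ℝ} (hu : ContDiff ℝ (n + 1) u)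
    (i : Fin 4) : ContDiff ℝ n (pdR i u) :=
  (hu.fderiv_right le_rfl).clm_apply contDiff_const

lemma pdC_div_self_comm (hf : ContDiff ℝ 2 f) (hx : f x ≠ 0) (μ ν : Fin 4) :
    pdC μ (fun y => pdC ν f y / f y) x = pdC ν (fun y => pdC μ f y / f y) x := by
  have hfx : DifferentiableAt ℝ f x := hf.differentiable (by norm_num) x
  rw [pdC_div (differentiable_pdC hf ν x) hfx hx,
    pdC_div (differentiable_pdC hf μ x) hfx hx, pdC_comm hf]
  ring

end PartialDerivatives

section Velocity

variable {m0 hbar e : ℝ} {φ : (Fin 4 → ℝ) → ℂ} {A : Fin 4 → (Fin 4 → ℝ) → ℝ}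

lemma pdC_VelPhi (hφ : ContDiff ℝ 2 φ) {x : Fin 4 → ℝ} (hx : φ x ≠ 0)
    {ν : Fin 4} (hA : DifferentiableAt ℝ (A ν) x) (μ : Fin 4) :
    pdC μ (fun y => VelPhi m0 hbar e φ A ν y) x
      = 1 / m0 * (I * hbar * mink ν * pdC μ (fun y => pdC ν φ y / φ y) x
          + e * pdR μ (A ν) x) := by
  have hq : DifferentiableAt ℝ (fun y => pdC ν φ y / φ y) x := by
    simp only [div_eq_mul_inv]
    exact (differentiable_pdC hφ ν x).mul ((hφ.differentiable (by norm_num) x).fun_inv hx)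
  have hAc : DifferentiableAt ℝ (fun y => (A ν y : ℂ)) x := ofRealCLM.differentiableAt.comp x hA
  simp only [VelPhi, mul_div_assoc, ← mul_assoc]
  rw [pdC_const_mul ((hq.const_mul _).fun_add (hAc.const_mul _)),
    pdC_add (hq.const_mul _) (hAc.const_mul _), pdC_const_mul hq, pdC_const_mul hAc,
    pdC_ofReal hA]

lemma contDiff_VelPhi (hφ : ContDiff ℝ 3 φ) (hφ0 : ∀ x, φ x ≠ 0)
    (hA : ∀ μ, ContDiff ℝ 2 (A μ)) (ν : Fin 4) :
    ContDiff ℝ 2 (fun y => VelPhi m0 hbar e φ A ν y) := by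
  have hpd : ContDiff ℝ 2 (pdC ν φ) := contDiff_pdC (n := 2) hφ ν
  have hinv : ContDiff ℝ 2 (fun y => (φ y)⁻¹) := (hφ.of_le (by norm_num)).inv hφ0
  have hAc : ContDiff ℝ 2 (fun y => (A ν y : ℂ)) := ofRealCLM.contDiff.comp (hA ν)
  simp only [VelPhi, div_eq_mul_inv]
  fun_prop

lemma curl_VelPhi (hm0 : m0 ≠ 0) (hφ : ContDiff ℝ 2 φ) {x : Fin 4 → ℝ} (hx : φ x ≠ 0)
    (hA : ∀ μ, DifferentiableAt ℝ (A μ) x) (μ ν : Fin 4) :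
    e * (Ften A μ ν x : ℂ)
      = m0 * (mink μ * pdC μ (fun y => VelPhi m0 hbar e φ A ν y) x
          - mink ν * pdC ν (fun y => VelPhi m0 hbar e φ A μ y) x) := by
  rw [pdC_VelPhi hφ hx (hA ν), pdC_VelPhi hφ hx (hA μ), pdC_div_self_comm hφ hx μ ν, Ften]
  have hm0' : (m0 : ℂ) ≠ 0 := by exact_mod_cast hm0
  push_cast
  field_simp
  ring

lemma pdR_Ften (hm0 : m0 ≠ 0) (hφ : ContDiff ℝ 3 φ) (hφ0 : ∀ x, φ x ≠ 0)
    (hA : ∀ μ, ContDiff ℝ 2 (A μ)) (μ ν : Fin 4) (x : Fin 4 → ℝ) :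
    e * (pdR ν (fun y => Ften A μ ν y) x : ℂ)
      = m0 * (mink μ * pdC μ (pdC ν (fun y => VelPhi m0 hbar e φ A ν y)) x
          - mink ν * pdC ν (pdC ν (fun y => VelPhi m0 hbar e φ A μ y)) x) := by
  have hA' : ∀ ρ y, DifferentiableAt ℝ (A ρ) y := fun ρ => (hA ρ).differentiable (by norm_num)
  have hF : DifferentiableAt ℝ (fun y => Ften A μ ν y) x := by
    have hpdR : ∀ ρ σ, DifferentiableAt ℝ (pdR ρ (A σ)) x := fun ρ σ =>
      (contDiff_pdR (n := 1) (hA σ) ρ).differentiable (by norm_num) x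
    unfold Ften
    fun_prop
  have hV : ∀ ρ σ, DifferentiableAt ℝ (pdC ρ (fun y => VelPhi m0 hbar e φ A σ y)) x :=
    fun ρ σ => differentiable_pdC (contDiff_VelPhi hφ hφ0 hA σ) ρ x
  have hcurl : (fun y => e * (Ften A μ ν y : ℂ)) = fun y =>
      m0 * (mink μ * pdC μ (fun y => VelPhi m0 hbar e φ A ν y) y
        - mink ν * pdC ν (fun y => VelPhi m0 hbar e φ A μ y) y) :=
    funext fun y => curl_VelPhi hm0 (hφ.of_le (by norm_num)) (hφ0 y) (fun ρ => hA' ρ y) μ ν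
  have hFc : DifferentiableAt ℝ (fun y => (Ften A μ ν y : ℂ)) x :=
    ofRealCLM.differentiableAt.comp x hF
  rw [← pdC_ofReal hF, ← pdC_const_mul hFc, hcurl,
    pdC_const_mul (((hV μ ν).const_mul _).fun_sub ((hV ν μ).const_mul _)),
    pdC_sub ((hV μ ν).const_mul _) ((hV ν μ).const_mul _), pdC_const_mul (hV μ ν),
    pdC_const_mul (hV ν μ), pdC_comm (contDiff_VelPhi hφ hφ0 hA ν) ν μ]

lemma opLow_eq_VelPhi_mul (hm0 : m0 ≠ 0) {y : Fin 4 → ℝ} (hy : φ y ≠ 0) (ν : Fin 4) :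
    opLow hbar e A ν φ y = m0 * mink ν * VelPhi m0 hbar e φ A ν y * φ y := by
  have hg : (mink ν : ℂ) * mink ν = 1 := by exact_mod_cast mink_mul_self ν
  have hm0' : (m0 : ℂ) ≠ 0 := by exact_mod_cast hm0
  unfold opLow VelPhi
  field_simp
  push_cast
  linear_combination (-(I * hbar * pdC ν φ y)) * hg

lemma mink_mul_opLow_opLow (hm0 : m0 ≠ 0) (hφ : ContDiff ℝ 3 φ) (hφ0 : ∀ x, φ x ≠ 0)
    (hA : ∀ μ, ContDiff ℝ 2 (A μ)) (ν : Fin 4) (x : Fin 4 → ℝ) :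
    mink ν * opLow hbar e A ν (fun y => opLow hbar e A ν φ y) x
      = m0 * φ x * (m0 * (mink ν * (VelPhi m0 hbar e φ A ν x * VelPhi m0 hbar e φ A ν x))
          + I * hbar * pdC ν (fun y => VelPhi m0 hbar e φ A ν y) x) := by
  have hg : (mink ν : ℂ) * mink ν = 1 := by exact_mod_cast mink_mul_self ν
  have hV : DifferentiableAt ℝ (fun y => VelPhi m0 hbar e φ A ν y) x :=
    (contDiff_VelPhi hφ hφ0 hA ν).differentiable (by norm_num) x
  have hφx : DifferentiableAt ℝ φ x := hφ.differentiable (by norm_num) x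
  have hψ : (fun y => opLow hbar e A ν φ y)
      = fun y => m0 * mink ν * VelPhi m0 hbar e φ A ν y * φ y :=
    funext fun y => opLow_eq_VelPhi_mul hm0 (hφ0 y) ν
  have hψx : I * hbar * pdC ν φ x + e * ((mink ν * A ν x : ℝ) : ℂ) * φ x
      = m0 * mink ν * VelPhi m0 hbar e φ A ν x * φ x := opLow_eq_VelPhi_mul hm0 (hφ0 x) ν
  have hDψ : pdC ν (fun y => opLow hbar e A ν φ y) x
      = m0 * mink ν * (pdC ν (fun y => VelPhi m0 hbar e φ A ν y) x * φ x
          + VelPhi m0 hbar e φ A ν x * pdC ν φ x) := by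
    rw [hψ, pdC_mul (hV.const_mul _) hφx, pdC_const_mul hV]
    ring
  change mink ν * (I * hbar * pdC ν (fun y => opLow hbar e A ν φ y) x
      + e * ((mink ν * A ν x : ℝ) : ℂ) * opLow hbar e A ν φ x) = _
  rw [hDψ, opLow_eq_VelPhi_mul hm0 (hφ0 x) ν]
  linear_combination (mink ν * mink ν * m0 * VelPhi m0 hbar e φ A ν x) * hψx
    + (m0 * I * hbar * pdC ν (fun y => VelPhi m0 hbar e φ A ν y) x * φ x
      + m0 ^ 2 * mink ν * VelPhi m0 hbar e φ A ν x ^ 2 * φ x) * hg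

lemma KGop_div_eq_VelPhi (hm0 : m0 ≠ 0) (hφ : ContDiff ℝ 3 φ) (hφ0 : ∀ x, φ x ≠ 0)
    (hA : ∀ μ, ContDiff ℝ 2 (A μ)) (x : Fin 4 → ℝ) :
    KGop hbar e A φ x / (m0 * φ x)
      = m0 * ∑ ν, mink ν * (VelPhi m0 hbar e φ A ν x * VelPhi m0 hbar e φ A ν x)
        + I * hbar * ∑ ν, pdC ν (fun y => VelPhi m0 hbar e φ A ν y) x := by
  have hm0' : (m0 : ℂ) ≠ 0 := by exact_mod_cast hm0
  rw [div_eq_iff (mul_ne_zero hm0' (hφ0 x)), KGop,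
    Finset.sum_congr rfl fun ν _ => mink_mul_opLow_opLow hm0 hφ hφ0 hA ν x,
    ← Finset.mul_sum, Finset.sum_add_distrib, ← Finset.mul_sum, ← Finset.mul_sum]
  ring

lemma pdC_KGop_div (hm0 : m0 ≠ 0) (hφ : ContDiff ℝ 3 φ) (hφ0 : ∀ x, φ x ≠ 0)
    (hA : ∀ μ, ContDiff ℝ 2 (A μ)) (μ : Fin 4) (x : Fin 4 → ℝ) :
    pdC μ (fun y => KGop hbar e A φ y / (m0 * φ y)) x
      = m0 * (2 * ∑ ν, mink ν *
          (VelPhi m0 hbar e φ A ν x * pdC μ (fun y => VelPhi m0 hbar e φ A ν y) x))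
        + I * hbar * ∑ ν, pdC μ (pdC ν (fun y => VelPhi m0 hbar e φ A ν y)) x := by
  have hV : ∀ ν, DifferentiableAt ℝ (fun y => VelPhi m0 hbar e φ A ν y) x := fun ν =>
    (contDiff_VelPhi hφ hφ0 hA ν).differentiable (by norm_num) x
  have hVV : ∀ ν, DifferentiableAt ℝ
      (fun y => (mink ν : ℂ) * (VelPhi m0 hbar e φ A ν y * VelPhi m0 hbar e φ A ν y)) x :=
    fun ν => ((hV ν).fun_mul (hV ν)).const_mul _
  have hdV : ∀ ν, DifferentiableAt ℝ (pdC ν (fun y => VelPhi m0 hbar e φ A ν y)) x :=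
    fun ν => differentiable_pdC (contDiff_VelPhi hφ hφ0 hA ν) ν x
  have hsum₁ := DifferentiableAt.fun_sum (u := Finset.univ) fun ν _ => hVV ν
  have hsum₂ := DifferentiableAt.fun_sum (u := Finset.univ) fun ν _ => hdV ν
  rw [funext (KGop_div_eq_VelPhi hm0 hφ hφ0 hA), pdC_add (hsum₁.const_mul _) (hsum₂.const_mul _),
    pdC_const_mul hsum₁, pdC_const_mul hsum₂, pdC_sum hVV, pdC_sum hdV]
  congr 1
  simp only [Finset.mul_sum, pdC_const_mul ((hV _).fun_mul (hV _)), pdC_mul (hV _) (hV _)]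
  exact Finset.sum_congr rfl fun ν _ => by ring

theorem stochastic_dynamics_identity {lam : ℝ} (hm0 : m0 ≠ 0) (hlam : lam ^ 2 = hbar / m0)
    (hφ : ContDiff ℝ 3 φ) (hφ0 : ∀ x, φ x ≠ 0) (hA : ∀ μ, ContDiff ℝ 2 (A μ))
    (μ : Fin 4) (x : Fin 4 → ℝ) :
    m0 * Dtau m0 hbar e lam φ A (fun y => VelPhi m0 hbar e φ A μ y) x
        + e * VhatF m0 hbar e lam φ A μ x
      = 1 / 2 * mink μ * pdC μ (fun y => KGop hbar e A φ y / (m0 * φ y)) x := by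
  have hcurl : e * ∑ ν, mink ν * VelPhi m0 hbar e φ A ν x * (Ften A μ ν x : ℂ)
      = m0 * (mink μ * ∑ ν, mink ν *
            (VelPhi m0 hbar e φ A ν x * pdC μ (fun y => VelPhi m0 hbar e φ A ν y) x)
          - ∑ ν, VelPhi m0 hbar e φ A ν x * pdC ν (fun y => VelPhi m0 hbar e φ A μ y) x) := by
    rw [Finset.mul_sum, Finset.mul_sum, ← Finset.sum_sub_distrib, Finset.mul_sum]
    refine Finset.sum_congr rfl fun ν _ => ?_
    have hg : (mink ν : ℂ) * mink ν = 1 := by exact_mod_cast mink_mul_self ν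
    linear_combination (mink ν * VelPhi m0 hbar e φ A ν x) *
        curl_VelPhi hm0 (hφ.of_le (by norm_num)) (hφ0 x)
          (fun ρ => (hA ρ).differentiable (by norm_num) x) μ ν
      - (m0 * VelPhi m0 hbar e φ A ν x * pdC ν (fun y => VelPhi m0 hbar e φ A μ y) x) * hg
  have hdiv : e * ∑ ν, (pdR ν (fun y => Ften A μ ν y) x : ℂ)
      = m0 * (mink μ * ∑ ν, pdC μ (pdC ν (fun y => VelPhi m0 hbar e φ A ν y)) x
          - boxC (fun y => VelPhi m0 hbar e φ A μ y) x) := by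
    rw [boxC, Finset.mul_sum, Finset.mul_sum, ← Finset.sum_sub_distrib, Finset.mul_sum]
    exact Finset.sum_congr rfl fun ν _ => pdR_Ften hm0 hφ hφ0 hA μ ν x
  have hħ : (m0 : ℂ) * lam ^ 2 = hbar := by
    have hm0' : (m0 : ℂ) ≠ 0 := by exact_mod_cast hm0
    rw [← Complex.ofReal_pow, hlam]
    push_cast
    field_simp
  rw [pdC_KGop_div hm0 hφ hφ0 hA]
  unfold Dtau VhatF
  push_cast
  linear_combination hcurl + (I * lam ^ 2 / 2) * hdiv
    + (I / 2 * mink μ * ∑ ν, pdC μ (pdC ν (fun y => VelPhi m0 hbar e φ A ν y)) x) * hħ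

end Velocity

theorem stmt_17_general (m0 hbar e c lam : ℝ) (hm0 : 0 < m0) (hlam : lam ^ 2 = hbar / m0)
    (φ : (Fin 4 → ℝ) → ℂ) (hφ : ContDiff ℝ 3 φ) (hφ0 : ∀ x, φ x ≠ 0)
    (A : Fin 4 → (Fin 4 → ℝ) → ℝ) (hA : ∀ μ, ContDiff ℝ 2 (A μ)) :
    (∀ (μ : Fin 4) (x : Fin 4 → ℝ),
      (m0 : ℂ) * Dtau m0 hbar e lam φ A (fun y => VelPhi m0 hbar e φ A μ y) x
        + (e : ℂ) * VhatF m0 hbar e lam φ A μ x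
      = (1 / 2 : ℂ) * (mink μ : ℂ) *
          pdC μ (fun y => KGop hbar e A φ y / ((m0 : ℂ) * φ y)) x) ∧
    ((∀ x, KGop hbar e A φ x = ((m0 ^ 2 * c ^ 2 : ℝ) : ℂ) * φ x) →
      ∀ (μ : Fin 4) (x : Fin 4 → ℝ),
        (m0 : ℂ) * Dtau m0 hbar e lam φ A (fun y => VelPhi m0 hbar e φ A μ y) x
          = -(e : ℂ) * VhatF m0 hbar e lam φ A μ x) := by
  have hidentity := stochastic_dynamics_identity (e := e) hm0.ne' hlam hφ hφ0 hA
  refine ⟨hidentity, fun hKG μ x => ?_⟩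
  have hconst : (fun y => KGop hbar e A φ y / ((m0 : ℂ) * φ y))
      = fun _ => ((m0 * c ^ 2 : ℝ) : ℂ) := by
    funext y
    have hm0' : (m0 : ℂ) ≠ 0 := by exact_mod_cast hm0.ne'
    rw [hKG y]
    field_simp [hφ0 y]
    push_cast
    ring
  have h := hidentity μ x
  rw [hconst, pdC_const, mul_zero] at h
  linear_combination h

/-- The stochastic dynamics equation implies the Klein–Gordon equation: with
`λ² = ℏ/m₀`, one has the pointwise identity
`m₀ D_τ V^μ + e V̂_ν F^{μν} = (1/2)∂^μ[(iℏ∂_ν + eA_ν)(iℏ∂^ν + eA^ν)φ/(m₀φ)]`;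
in particular, if `φ` satisfies the Klein–Gordon equation, then
`m₀ D_τ V^μ = −e V̂_ν F^{μν}`. -/
theorem stmt_17 (m0 hbar e c lam : ℝ) (hm0 : 0 < m0) (hhbar : 0 < hbar) (he : 0 < e)
    (hc : 0 < c) (hlam : lam ^ 2 = hbar / m0)
    (φ : (Fin 4 → ℝ) → ℂ) (hφ : ContDiff ℝ 3 φ) (hφ0 : ∀ x, φ x ≠ 0)
    (A : Fin 4 → (Fin 4 → ℝ) → ℝ) (hA : ∀ μ, ContDiff ℝ 2 (A μ)) :
    (∀ (μ : Fin 4) (x : Fin 4 → ℝ),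
      (m0 : ℂ) * Dtau m0 hbar e lam φ A (fun y => VelPhi m0 hbar e φ A μ y) x
        + (e : ℂ) * VhatF m0 hbar e lam φ A μ x
      = (1 / 2 : ℂ) * (mink μ : ℂ) *
          pdC μ (fun y => KGop hbar e A φ y / ((m0 : ℂ) * φ y)) x) ∧
    ((∀ x, KGop hbar e A φ x = ((m0 ^ 2 * c ^ 2 : ℝ) : ℂ) * φ x) →
      ∀ (μ : Fin 4) (x : Fin 4 → ℝ),
        (m0 : ℂ) * Dtau m0 hbar e lam φ A (fun y => VelPhi m0 hbar e φ A μ y) x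
          = -(e : ℂ) * VhatF m0 hbar e lam φ A μ x) :=
  stmt_17_general m0 hbar e c lam hm0 hlam φ hφ hφ0 A hA
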